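/- Let (R_{ij}, Δ⁰_i) be a partial graded odd form ring of rank ℓ ≥ 3 satisfying (R29) and (R30), and suppose that for every i ≠ 0 there is a group homomorphism u ↦ u·(−1) : Δ⁰_i → Δ⁰_i satisfying (a∗b)·(−1) = a∗b and (u·b)·(−1) = u·(−b) for all a ∈ R_{−i,j}, b ∈ R_{ji}, u ∈ Δ⁰_j with |i|, |j| distinct and nonzero. Then (R_{ij}, Δ⁰_i) carries a structure of a partial graded odd form ℤ-algebra, with the smallest possible augmentation D_i^min = ⟨R_{−i,j}∗R_{ji} : |j| ∉ {0, |i|}⟩ and the largest possible augmentation D_i^max = {u ∈ Δ⁰_i : u = u·(−1) and u∘Δ⁰_j = 0 for all j with |j| ∉ {0, |i|}}, which equals {u ∈ Δ⁰_i : u = u·(−1), u∘Δ⁰_{j*} = u∘Δ⁰_{−j*} = 0} for any fixed j* with |j*| ∉ {0, |i|}. Moreover, the right action of the multiplicative monoid of ℤ on each Δ⁰_i is uniquely determined; explicitly, u·n = binom(n+1, 2)·u ∔ binom(n, 2)·(u·(−1)) where k·u denotes the k-th power of u in Δ⁰_i. -/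

import Mathlib

/-- Transport along equalities of indices. -/
def rc2 {F : ℤ → ℤ → Type} {i j i' j' : ℤ} (hi : i = i') (hj : j = j') (a : F i j) :
    F i' j' := cast (by rw [hi, hj]) a

/-- An admissible index: nonzero and of absolute value at most `ℓ`. -/
def adm (ℓ : ℕ) (i : ℤ) : Prop := i ≠ 0 ∧ |i| ≤ (ℓ : ℤ)

/-- Two admissible indices with distinct absolute values. -/
def adm2 (ℓ : ℕ) (i j : ℤ) : Prop := adm ℓ i ∧ adm ℓ j ∧ |i| ≠ |j|

/-- Three admissible indices with pairwise distinct absolute values. -/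
def adm3 (ℓ : ℕ) (i j k : ℤ) : Prop :=
  adm ℓ i ∧ adm ℓ j ∧ adm ℓ k ∧ |i| ≠ |j| ∧ |i| ≠ |k| ∧ |j| ≠ |k|

/-- Four admissible indices with pairwise distinct absolute values. -/
def adm4 (ℓ : ℕ) (i j k l : ℤ) : Prop :=
  adm3 ℓ i j k ∧ adm ℓ l ∧ |i| ≠ |l| ∧ |j| ≠ |l| ∧ |k| ≠ |l|

/-- A partial graded odd form ring of rank `ℓ` (components `R i j` for nonzero
`i, j ∈ [-ℓ, ℓ]` with `|i| ≠ |j|` and odd form parameters `Δ i` for nonzero `i`,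
with all operations and the identities (R1)–(R28); operations at inadmissible
indices are junk data, all axioms being guarded by admissibility). -/
structure PGOFR (ℓ : ℕ) where
  R : ℤ → ℤ → Type
  Δ : ℤ → Type
  [instR : ∀ i j, AddGroup (R i j)]
  [instΔ : ∀ i, AddGroup (Δ i)]
  inv : ∀ i j, R i j → R (-j) (-i)
  mul : ∀ i j k, R i j → R j k → R i k
  star : ∀ i j, R (-i) j → R j i → Δ i
  circ : ∀ i j, Δ i → Δ j → R (-i) j
  tri : ∀ i j, Δ i → R i j → R (-i) j
  dot : ∀ i j, Δ i → R i j → Δ j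
  -- the involution is an anti-isomorphism
  inv_add : ∀ i j, adm2 ℓ i j → ∀ a b : R i j, inv i j (a + b) = inv i j b + inv i j a
  inv_inv : ∀ i j, adm2 ℓ i j → ∀ a : R i j,
    rc2 (F := R) (neg_neg i) (neg_neg j) (inv (-j) (-i) (inv i j a)) = a
  -- (R1)
  r1 : ∀ i j k, adm3 ℓ i j k → ∀ (a : R i j) (b : R j k) (c : R i k),
    mul i j k a b + c = c + mul i j k a b
  -- (R2)
  r2 : ∀ i j k, adm3 ℓ i j k → ∀ (a b : R i j) (c : R j k),
    mul i j k (a + b) c = mul i j k a c + mul i j k b c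
  -- (R3)
  r3 : ∀ i j k, adm3 ℓ i j k → ∀ (a : R i j) (b c : R j k),
    mul i j k a (b + c) = mul i j k a b + mul i j k a c
  -- (R4)
  r4 : ∀ i j k, adm3 ℓ i j k → ∀ (a : R i j) (b : R j k),
    inv i k (mul i j k a b) = mul (-k) (-j) (-i) (inv j k b) (inv i j a)
  -- (R5)
  r5 : ∀ i j, adm2 ℓ i j → ∀ (a : R (-i) j) (b : R j i) (u : Δ i),
    star i j a b + u = u + star i j a b
  -- (R6)
  r6 : ∀ i j, adm2 ℓ i j → ∀ (a b : R (-i) j) (c : R j i),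
    star i j (a + b) c = star i j a c + star i j b c
  -- (R7)
  r7 : ∀ i j, adm2 ℓ i j → ∀ (a : R (-i) j) (b c : R j i),
    star i j a (b + c) = star i j a b + star i j a c
  -- (R8)
  r8 : ∀ i j, adm2 ℓ i j → ∀ (a : R (-i) j) (b : R j i),
    star i j a b +
      star i (-j) (inv j i b) (rc2 (F := R) rfl (neg_neg i) (inv (-i) j a)) = 0
  -- (R9)
  r9 : ∀ i j, adm2 ℓ i j → ∀ (u : Δ i) (v : Δ j) (a : R (-i) j),
    a + circ i j u v = circ i j u v + a
  -- (R10)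
  r10 : ∀ i j, adm2 ℓ i j → ∀ (u v : Δ i) (w : Δ j),
    circ i j (u + v) w = circ i j u w + circ i j v w
  -- (R11)
  r11 : ∀ i j, adm2 ℓ i j → ∀ (u : Δ i) (v w : Δ j),
    circ i j u (v + w) = circ i j u v + circ i j u w
  -- (R12)
  r12 : ∀ i j, adm2 ℓ i j → ∀ (u : Δ i) (v : Δ j),
    rc2 (F := R) rfl (neg_neg i) (inv (-i) j (circ i j u v)) = circ j i v u
  -- (R13)
  r13 : ∀ i j, adm2 ℓ i j → ∀ (u : Δ i) (a : R (-j) (-i)) (b : R (-i) j),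
    circ i j u (star j (-i) a b) +
      tri i j u (-(rc2 (F := R) (neg_neg i) (neg_neg j) (inv (-j) (-i) a))) + b =
    b + tri i j u (-(rc2 (F := R) (neg_neg i) (neg_neg j) (inv (-j) (-i) a)))
  -- (R14)
  r14 : ∀ i j, adm2 ℓ i j → ∀ (u : Δ i) (a : R i j) (v : Δ j),
    dot i j u a + v = v + dot i j u a - star j (-i) (inv i j a) (circ i j u v)
  -- (R15)
  r15 : ∀ i j, adm2 ℓ i j → ∀ (u v : Δ i) (a : R i j),
    dot i j (u + v) a = dot i j u a + dot i j v a
  -- (R16)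
  r16 : ∀ i j, adm2 ℓ i j → ∀ (u v : Δ i) (a : R i j),
    tri i j (u + v) a = tri i j v a + circ i j u (dot i j v (-a)) + tri i j u a
  -- (R17)
  r17 : ∀ i j, adm2 ℓ i j → ∀ (u : Δ i) (a b : R i j),
    tri i j u (a + b) = tri i j u a + tri i j u b
  -- (R18)
  r18 : ∀ i j, adm2 ℓ i j → ∀ (u : Δ i) (a b : R i j),
    dot i j u (a + b) = dot i j u a + star j (-i) (inv i j b) (tri i j u a) + dot i j u b
  -- (R19)
  r19 : ∀ i j k l, adm4 ℓ i j k l → ∀ (a : R i j) (b : R j k) (c : R k l),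
    mul i k l (mul i j k a b) c = mul i j l a (mul j k l b c)
  -- (R20)
  r20 : ∀ i j k, adm3 ℓ i j k → ∀ (a : R (-i) j) (b : R j k) (c : R k i),
    star i k (mul (-i) j k a b) c = star i j a (mul j k i b c)
  -- (R21)
  r21 : ∀ i j k, adm3 ℓ i j k → ∀ (u : Δ i) (a : R (-j) k) (b : R k j),
    circ i j u (star j k a b) = 0
  -- (R22)
  r22 : ∀ i j k, adm3 ℓ i j k → ∀ (u : Δ i) (v : Δ j) (a : R j k),
    circ i k u (dot j k v a) = mul (-i) j k (circ i j u v) a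
  -- (R23)
  r23 : ∀ i j k, adm3 ℓ i j k → ∀ (u : Δ i) (a : R i j) (b : R i k),
    mul (-j) (-i) k (inv i j a) (tri i k u b) +
      circ j k (dot i j u a) (dot i k u b) +
      mul (-j) i k (rc2 (F := R) rfl (neg_neg i) (inv (-i) j (tri i j u a))) b = 0
  -- (R24)
  r24 : ∀ i j k, adm3 ℓ i j k → ∀ (a : R (-i) j) (b : R j i) (c : R i k),
    tri i k (star i j a b) c =
      mul (-i) j k a (mul j i k b c) -
      mul (-i) (-j) k (inv j i b)
        (mul (-j) i k (rc2 (F := R) rfl (neg_neg i) (inv (-i) j a)) c)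
  -- (R25)
  r25 : ∀ i j k, adm3 ℓ i j k → ∀ (a : R (-i) j) (b : R j i) (c : R i k),
    dot i k (star i j a b) c =
      star k j (mul (-k) (-i) j (inv i k c) a) (mul j i k b c)
  -- (R26)
  r26 : ∀ i j k, adm3 ℓ i j k → ∀ (u : Δ i) (a : R i j) (b : R j k),
    mul (-i) j k (tri i j u a) b = tri i k u (mul i j k a b)
  -- (R27)
  r27 : ∀ i j k, adm3 ℓ i j k → ∀ (u : Δ i) (a : R i j) (b : R j k),
    tri j k (-(dot i j u a)) b =
      mul (-j) i k (rc2 (F := R) rfl (neg_neg i) (inv (-i) j (tri i j u a)))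
        (mul i j k a b)
  -- (R28)
  r28 : ∀ i j k, adm3 ℓ i j k → ∀ (u : Δ i) (a : R i j) (b : R j k),
    dot j k (dot i j u a) b = dot i k u (mul i j k a b)

attribute [instance] PGOFR.instR PGOFR.instΔ

namespace PGOFR

variable {ℓ : ℕ}

/-- Condition (R29). -/
def cond29 (o : PGOFR ℓ) : Prop :=
  ∀ i j k, adm3 ℓ i j k →
    AddSubgroup.closure
      ({x : o.R i j | ∃ a b, x = o.mul i k j a b} ∪
       {x : o.R i j | ∃ a b, x = o.mul i (-k) j a b}) = ⊤

/-- Condition (R30). -/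
def cond30 (o : PGOFR ℓ) : Prop :=
  ∀ i j, adm2 ℓ i j →
    AddSubgroup.closure
      ({x : o.Δ i | ∃ u a, x = o.dot j i u a} ∪
       {x : o.Δ i | ∃ u a, x = o.dot (-j) i u a} ∪
       {x : o.Δ i | ∃ a b, x = o.star i j a b}) = ⊤

/-- Associativity condition (A1). -/
def condA1 (o : PGOFR ℓ) : Prop :=
  ∀ i j k l m n : ℤ, adm3 ℓ i j k → |i| = |m| → |j| = |l| → |k| = |n| →
    ∀ (a : o.R i j) (b : o.R j k) (c : o.R k l) (d : o.R l m) (e : o.R m n),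
      o.mul i j n a (o.mul j m n (o.mul j k m b (o.mul k l m c d)) e) =
      o.mul i l n (o.mul i k l (o.mul i j k a b) c) (o.mul l m n d e)

/-- Associativity condition (A2). -/
def condA2 (o : PGOFR ℓ) : Prop :=
  ∀ i j k l m n : ℤ, adm3 ℓ i j k → |i| = |l| → |j| = |n| → |k| = |m| →
    ∀ (a : o.R i j) (b : o.R j k) (c : o.R k l) (d : o.R l m) (e : o.R m n),
      o.mul i k n (o.mul i j k a b) (o.mul k l n c (o.mul l m n d e)) =
      o.mul i m n (o.mul i l m (o.mul i j l a (o.mul j k l b c)) d) e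

/-- Associativity condition (A3). -/
def condA3 (o : PGOFR ℓ) : Prop :=
  ∀ i j k l m n : ℤ, adm3 ℓ i j l → |i| = |k| → |j| = |m| → |l| = |n| →
    ∀ (a : o.R i j) (b : o.R j k) (c : o.R k l) (d : o.R l m) (e : o.R m n),
      o.mul i m n (o.mul i l m (o.mul i j l a (o.mul j k l b c)) d) e =
      o.mul i j n a (o.mul j k n b (o.mul k m n (o.mul k l m c d) e))

/-- Associativity condition (A4). -/
def condA4 (o : PGOFR ℓ) : Prop :=
  ∀ i j k l m n : ℤ, adm3 ℓ i j k → |i| = |l| → |j| = |m| → |k| = |n| →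
    ∀ (a : o.R i j) (b : o.R j k) (c : o.R k l) (d : o.R l m) (e : o.R m n),
      o.mul i m n (o.mul i k m (o.mul i j k a b) (o.mul k l m c d)) e =
      o.mul i j n a (o.mul j l n (o.mul j k l b c) (o.mul l m n d e))

end PGOFR
namespace PGOFR

/-- The subgroup `D_i^min = ⟨R_{-i,j} ∗ R_{ji} : j⟩` of `Δ i`. -/
def Dmin {ℓ : ℕ} (o : PGOFR ℓ) (i : ℤ) : AddSubgroup (o.Δ i) :=
  AddSubgroup.closure {x | ∃ j, adm2 ℓ i j ∧ ∃ a b, x = o.star i j a b}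

end PGOFR
/-- The structure of a partial graded odd form `K`-algebra on a partial graded
odd form ring: `K`-module structures on the `R i j`, 2-step nilpotent
`K`-module structures on the `Δ i` with nilpotent filtrations `D i`, and the
identities (R31)–(R41). -/
structure PGOFAlgStr (K : Type) [CommRing K] {ℓ : ℕ} (o : PGOFR ℓ) where
  -- the R i j are K-modules
  commR : ∀ i j, adm2 ℓ i j → ∀ a b : o.R i j, a + b = b + a
  smulR : ∀ i j, K → o.R i j → o.R i j
  smulR_add : ∀ i j, adm2 ℓ i j → ∀ (k : K) (a b : o.R i j),
    smulR i j k (a + b) = smulR i j k a + smulR i j k b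
  add_smulR : ∀ i j, adm2 ℓ i j → ∀ (k k' : K) (a : o.R i j),
    smulR i j (k + k') a = smulR i j k a + smulR i j k' a
  mul_smulR : ∀ i j, adm2 ℓ i j → ∀ (k k' : K) (a : o.R i j),
    smulR i j (k * k') a = smulR i j k (smulR i j k' a)
  one_smulR : ∀ i j, adm2 ℓ i j → ∀ a : o.R i j, smulR i j 1 a = a
  -- the Δ i are 2-step nilpotent K-modules with nilpotent filtration D i
  actK : ∀ i, o.Δ i → K → o.Δ i
  actK_add : ∀ i, adm ℓ i → ∀ (u v : o.Δ i) (k : K),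
    actK i (u + v) k = actK i u k + actK i v k
  actK_one : ∀ i, adm ℓ i → ∀ u : o.Δ i, actK i u 1 = u
  actK_mul : ∀ i, adm ℓ i → ∀ (u : o.Δ i) (k k' : K),
    actK i (actK i u k) k' = actK i u (k * k')
  D : ∀ i, AddSubgroup (o.Δ i)
  D_central : ∀ i, adm ℓ i → ∀ v ∈ D i, ∀ u : o.Δ i, u + v = v + u
  D_comm : ∀ i, adm ℓ i → ∀ u v : o.Δ i, u + v - u - v ∈ D i
  smulD : ∀ i, K → o.Δ i → o.Δ i
  smulD_mem : ∀ i, adm ℓ i → ∀ (k : K), ∀ v ∈ D i, smulD i k v ∈ D i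
  smulD_add : ∀ i, adm ℓ i → ∀ (k : K), ∀ v ∈ D i, ∀ w ∈ D i,
    smulD i k (v + w) = smulD i k v + smulD i k w
  add_smulD : ∀ i, adm ℓ i → ∀ (k k' : K), ∀ v ∈ D i,
    smulD i (k + k') v = smulD i k v + smulD i k' v
  mul_smulD : ∀ i, adm ℓ i → ∀ (k k' : K), ∀ v ∈ D i,
    smulD i (k * k') v = smulD i k (smulD i k' v)
  one_smulD : ∀ i, adm ℓ i → ∀ v ∈ D i, smulD i 1 v = v
  actK_comm : ∀ i, adm ℓ i → ∀ (u v : o.Δ i) (k k' : K),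
    actK i u k + actK i v k' - actK i u k - actK i v k' =
      smulD i (k * k') (u + v - u - v)
  τ : ∀ i, o.Δ i → o.Δ i
  τ_mem : ∀ i, adm ℓ i → ∀ u : o.Δ i, τ i u ∈ D i
  actK_add_scalar : ∀ i, adm ℓ i → ∀ (u : o.Δ i) (k k' : K),
    actK i u (k + k') = actK i u k + smulD i (k * k') (τ i u) + actK i u k'
  actK_D : ∀ i, adm ℓ i → ∀ v ∈ D i, ∀ k : K, actK i v k = smulD i (k * k) v
  -- (R31)
  r31 : ∀ i j, adm2 ℓ i j → ∀ v ∈ D i, ∀ u : o.Δ j, o.circ i j v u = 0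
  -- (R32)
  r32 : ∀ i j, adm2 ℓ i j → ∀ (a : o.R (-i) j) (b : o.R j i), o.star i j a b ∈ D i
  -- (R33)
  r33 : ∀ i j, adm2 ℓ i j → ∀ v ∈ D i, ∀ a : o.R i j, o.dot i j v a ∈ D j
  -- (R34)
  r34 : ∀ i j, adm2 ℓ i j → ∀ (k : K) (a : o.R i j),
    o.inv i j (smulR i j k a) = smulR (-j) (-i) k (o.inv i j a)
  -- (R35)
  r35l : ∀ i j k, adm3 ℓ i j k → ∀ (c : K) (a : o.R i j) (b : o.R j k),
    o.mul i j k (smulR i j c a) b = smulR i k c (o.mul i j k a b)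
  r35r : ∀ i j k, adm3 ℓ i j k → ∀ (c : K) (a : o.R i j) (b : o.R j k),
    o.mul i j k a (smulR j k c b) = smulR i k c (o.mul i j k a b)
  -- (R36)
  r36l : ∀ i j, adm2 ℓ i j → ∀ (c : K) (a : o.R (-i) j) (b : o.R j i),
    o.star i j (smulR (-i) j c a) b = smulD i c (o.star i j a b)
  r36r : ∀ i j, adm2 ℓ i j → ∀ (c : K) (a : o.R (-i) j) (b : o.R j i),
    o.star i j a (smulR j i c b) = smulD i c (o.star i j a b)
  -- (R37)
  r37l : ∀ i j, adm2 ℓ i j → ∀ (c : K) (u : o.Δ i) (v : o.Δ j),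
    o.circ i j (actK i u c) v = smulR (-i) j c (o.circ i j u v)
  r37r : ∀ i j, adm2 ℓ i j → ∀ (c : K) (u : o.Δ i) (v : o.Δ j),
    o.circ i j u (actK j v c) = smulR (-i) j c (o.circ i j u v)
  -- (R38)
  r38l : ∀ i j, adm2 ℓ i j → ∀ (c : K) (u : o.Δ i) (a : o.R i j),
    o.tri i j (actK i u c) a = smulR (-i) j (c * c) (o.tri i j u a)
  r38r : ∀ i j, adm2 ℓ i j → ∀ (c : K) (u : o.Δ i) (a : o.R i j),
    o.tri i j u (smulR i j c a) = smulR (-i) j c (o.tri i j u a)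
  -- (R39)
  r39 : ∀ i j, adm2 ℓ i j → ∀ (c : K), ∀ v ∈ D i, ∀ a : o.R i j,
    o.tri i j (smulD i c v) a = smulR (-i) j c (o.tri i j v a)
  -- (R40)
  r40l : ∀ i j, adm2 ℓ i j → ∀ (c : K) (u : o.Δ i) (a : o.R i j),
    o.dot i j (actK i u c) a = o.dot i j u (smulR i j c a)
  r40r : ∀ i j, adm2 ℓ i j → ∀ (c : K) (u : o.Δ i) (a : o.R i j),
    actK j (o.dot i j u a) c = o.dot i j u (smulR i j c a)
  -- (R41)
  r41 : ∀ i j, adm2 ℓ i j → ∀ (c : K), ∀ v ∈ D i, ∀ a : o.R i j,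
    o.dot i j (smulD i c v) a = smulD j c (o.dot i j v a)

/-!
Write `σ u = u·(-1)`. By (R30) the group `Δ i` is generated by the elements `w·b` and `a ∗ b`,
on which the axioms compute everything explicitly. (R14) makes the `w·b` central modulo `D_i^min`,
so commutators in `Δ i` lie in the central subgroup `D_i^min`; on generators one checks that `σ`
is an involution inverting commutators and `u ∘ v`, with `u ∔ σ u ∈ D_i^min`. For any such `σ`
on a group of nilpotency class two, `u·n = binom(n+1, 2)·u ∔ binom(n, 2)·σ u` is an action of
the multiplicative monoid `ℤ` with `τ(u) = u ∔ σ u`. Its compatibility with `∘` and `·` follows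
from that of `σ`, and with `◁` from (R16) and, on generators `w·b`, from (R23), (R27), (R28),
which make `(w·b) ◁ a` quadratic in `b`. Both `D^min` and `D^max` are closed under the
operations an augmentation must respect; for `D^max` the key is (R22), which also shows that
`u ∘ Δ_j = u ∘ Δ_{-j} = 0` forces `u ∘ Δ_k = 0` for all `k`. Conversely, in any ℤ-algebra
structure `u·(-1)` agrees with `σ` on generators, and `u·(k + k') = u·k ∔ kk'·τ(u) ∔ u·k'`
pins down `u·n`.
-/

open scoped addCommutatorElement

section AddCommutator

variable {G : Type*} [AddGroup G]

theorem addCommutatorElement_eq_sub (a b : G) : ⁅a, b⁆ = a + b - a - b := by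
  simp only [addCommutatorElement_def, sub_eq_add_neg]

theorem add_eq_add_add_addCommutatorElement (hc : ∀ a b z : G, AddCommute ⁅a, b⁆ z)
    (a b : G) : a + b = b + a + ⁅a, b⁆ := by
  rw [← (hc a b _).eq]
  simp [addCommutatorElement_def, add_assoc]

theorem addCommutatorElement_add_left (hc : ∀ a b z : G, AddCommute ⁅a, b⁆ z) (a b v : G) :
    ⁅a + b, v⁆ = ⁅a, v⁆ + ⁅b, v⁆ := by
  have hb : b + v + -b = ⁅b, v⁆ + v := by
    rw [addCommutatorElement_def, neg_add_cancel_right]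
  calc ⁅a + b, v⁆ = a + (b + v + -b) + -a + -v := by
        simp only [addCommutatorElement_def, neg_add_rev, add_assoc]
    _ = ⁅b, v⁆ + (a + v + -a + -v) := by
        rw [hb, ← add_assoc a, ← (hc b v a).eq]; simp only [add_assoc]
    _ = ⁅a, v⁆ + ⁅b, v⁆ := by rw [← addCommutatorElement_def, (hc b v _).eq]

theorem addCommutatorElement_neg_left' (hc : ∀ a b z : G, AddCommute ⁅a, b⁆ z) (a v : G) :
    ⁅-a, v⁆ = -⁅a, v⁆ :=
  (AddMonoidHom.mk' (⁅·, v⁆) (addCommutatorElement_add_left hc · · v)).map_neg a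

theorem AddCommute.zsmul_add_zsmul_add {x y : G} (h : AddCommute x y) (p q p' q' : ℤ) :
    (p • x + q • y) + (p' • x + q' • y) = (p + p') • x + (q + q') • y := by
  rw [(h.symm.zsmul_zsmul q p').add_add_add_comm, add_zsmul, add_zsmul]

theorem QuotientAddGroup.mk_mem_center_iff (H : AddSubgroup G) [H.Normal] (x : G) :
    (x : G ⧸ H) ∈ AddSubgroup.center (G ⧸ H) ↔ ∀ z, ⁅x, z⁆ ∈ H := by
  rw [AddSubgroup.mem_center_iff, QuotientAddGroup.mk_surjective.forall]
  refine forall_congr' fun z => ?_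
  rw [← QuotientAddGroup.eq_zero_iff,
    show ((⁅x, z⁆ : G) : G ⧸ H) = ⁅(x : G ⧸ H), (z : G ⧸ H)⁆ from
      map_addCommutatorElement (QuotientAddGroup.mk' H) x z,
    addCommutatorElement_eq_zero_iff_add_comm, eq_comm]

theorem eq_zsmul_of_map_add {f : ℤ → G} (hf : ∀ m n, f (m + n) = f m + f n) (n : ℤ) :
    f n = n • f 1 := by
  have h := (AddMonoidHom.mk' f hf).map_zsmul n 1
  rwa [smul_eq_mul, mul_one] at h

end AddCommutator

-- `(n + 1).choose 2` and `n.choose 2` for `n : ℤ`; both divisions are exact.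
def choose2Succ (n : ℤ) : ℤ := n * (n + 1) / 2

def choose2 (n : ℤ) : ℤ := n * (n - 1) / 2

theorem two_mul_choose2Succ (n : ℤ) : 2 * choose2Succ n = n * (n + 1) :=
  Int.mul_ediv_cancel' (Int.even_mul_succ_self n).two_dvd

theorem two_mul_choose2 (n : ℤ) : 2 * choose2 n = n * (n - 1) :=
  Int.mul_ediv_cancel' (Int.even_mul_pred_self n).two_dvd

theorem choose2Succ_sub_choose2 (n : ℤ) : choose2Succ n - choose2 n = n := by
  linarith [two_mul_choose2Succ n, two_mul_choose2 n]

theorem choose2Succ_add_choose2 (n : ℤ) : choose2Succ n + choose2 n = n * n := by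
  linarith [two_mul_choose2Succ n, two_mul_choose2 n]

theorem choose2Succ_neg (n : ℤ) : choose2Succ (-n) = choose2 n := by
  linarith [two_mul_choose2Succ (-n), two_mul_choose2 n]

theorem choose2_neg (n : ℤ) : choose2 (-n) = choose2Succ n := by
  linarith [two_mul_choose2 (-n), two_mul_choose2Succ n]

theorem choose2Succ_add (k k' : ℤ) :
    choose2Succ (k + k') = choose2Succ k + k * k' + choose2Succ k' := by
  linarith [two_mul_choose2Succ (k + k'), two_mul_choose2Succ k, two_mul_choose2Succ k']

theorem choose2_add (k k' : ℤ) : choose2 (k + k') = choose2 k + k * k' + choose2 k' := by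
  linarith [two_mul_choose2 (k + k'), two_mul_choose2 k, two_mul_choose2 k']

section NegOneMap

variable {G : Type*} [AddGroup G]

/-- The properties of `σ u = u·(-1)` from which the action of the multiplicative monoid `ℤ` is
built; `u + σ u` plays the role of `τ(u)`. -/
structure IsNegOneMap (σ : G → G) : Prop where
  map_add : ∀ u v, σ (u + v) = σ u + σ v
  map_map : ∀ u, σ (σ u) = u
  addCommutatorElement_central : ∀ a b z : G, AddCommute ⁅a, b⁆ z
  addCommutatorElement_map_left : ∀ u v : G, ⁅σ u, v⁆ = -⁅u, v⁆
  add_map_central : ∀ u z : G, AddCommute (u + σ u) z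

/-- `u·n`, expressed through `u·(-1) = σ u`. -/
def quadAct (σ : G → G) (u : G) (n : ℤ) : G := choose2Succ n • u + choose2 n • σ u

variable {σ : G → G}

theorem quadAct_zero (u : G) : quadAct σ u 0 = 0 := by
  simp [quadAct, choose2Succ, choose2]

theorem quadAct_one (u : G) : quadAct σ u 1 = u := by
  simp [quadAct, choose2Succ, choose2]

theorem quadAct_neg_one (u : G) : quadAct σ u (-1) = σ u := by
  simp [quadAct, choose2Succ, choose2]

theorem quadAct_of_map_eq {v : G} (hv : σ v = v) (n : ℤ) : quadAct σ v n = (n * n) • v := by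
  rw [quadAct, hv, ← add_zsmul, choose2Succ_add_choose2]

theorem map_quadAct_of_map_neg {H : Type*} [AddGroup H] (f : G →+ H)
    (hf : ∀ u, f (σ u) = -f u) (u : G) (n : ℤ) : f (quadAct σ u n) = n • f u := by
  rw [quadAct, map_add, map_zsmul, map_zsmul, hf, zsmul_neg, ← neg_zsmul, ← add_zsmul,
    ← sub_eq_add_neg, choose2Succ_sub_choose2]

theorem add_map_add_eq (hσ : ∀ u v, σ (u + v) = σ u + σ v)
    (hc : ∀ a b z : G, AddCommute ⁅a, b⁆ z) (hσc : ∀ u v : G, ⁅σ u, v⁆ = -⁅u, v⁆)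
    (u v : G) : u + v + σ (u + v) = u + σ u + (v + σ v) + ⁅u, v⁆ := by
  have hvu : v + σ u = σ u + v + ⁅u, v⁆ := by
    rw [add_eq_add_add_addCommutatorElement hc v (σ u), ← addCommutatorElement_neg, hσc,
      neg_neg]
  rw [hσ, add_assoc u v, ← add_assoc v, hvu, (hc u v _).right_comm]
  simp only [add_assoc]

namespace IsNegOneMap

theorem map_zero (h : IsNegOneMap σ) : σ 0 = 0 := (AddMonoidHom.mk' σ h.map_add).map_zero

theorem map_neg (h : IsNegOneMap σ) (u : G) : σ (-u) = -σ u :=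
  (AddMonoidHom.mk' σ h.map_add).map_neg u

theorem map_zsmul (h : IsNegOneMap σ) (n : ℤ) (u : G) : σ (n • u) = n • σ u :=
  (AddMonoidHom.mk' σ h.map_add).map_zsmul n u

theorem zero_quadAct (h : IsNegOneMap σ) (n : ℤ) : quadAct σ 0 n = 0 := by
  rw [quadAct, h.map_zero, zsmul_zero, zsmul_zero, add_zero]

theorem addCommute_map (h : IsNegOneMap σ) (u : G) : AddCommute u (σ u) := by
  have hu := h.addCommutatorElement_map_left u u
  rw [addCommutatorElement_self, neg_zero, addCommutatorElement_eq_zero_iff_add_comm] at hu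
  exact hu.symm

theorem addCommutatorElement_quadAct_left (h : IsNegOneMap σ) (u w : G) (n : ℤ) :
    ⁅quadAct σ u n, w⁆ = n • ⁅u, w⁆ :=
  map_quadAct_of_map_neg (AddMonoidHom.mk' (⁅·, w⁆)
    (addCommutatorElement_add_left h.addCommutatorElement_central · · w))
    (h.addCommutatorElement_map_left · w) u n

theorem addCommutatorElement_quadAct_right (h : IsNegOneMap σ) (w v : G) (n : ℤ) :
    ⁅w, quadAct σ v n⁆ = n • ⁅w, v⁆ := by
  rw [← addCommutatorElement_neg, h.addCommutatorElement_quadAct_left, ← zsmul_neg,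
    addCommutatorElement_neg]

theorem addCommutatorElement_quadAct (h : IsNegOneMap σ) (u v : G) (k k' : ℤ) :
    ⁅quadAct σ u k, quadAct σ v k'⁆ = (k * k') • ⁅u, v⁆ := by
  rw [h.addCommutatorElement_quadAct_left, h.addCommutatorElement_quadAct_right, mul_zsmul]

theorem quadAct_add_int (h : IsNegOneMap σ) (u : G) (k k' : ℤ) :
    quadAct σ u (k + k') = quadAct σ u k + (k * k') • (u + σ u) + quadAct σ u k' := by
  have hu := h.addCommute_map u
  rw [quadAct, quadAct, quadAct, hu.zsmul_add, hu.zsmul_add_zsmul_add, hu.zsmul_add_zsmul_add,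
    choose2Succ_add, choose2_add]

theorem quadAct_succ (h : IsNegOneMap σ) (u : G) (n : ℤ) :
    quadAct σ u (n + 1) = quadAct σ u n + n • (u + σ u) + u := by
  rw [h.quadAct_add_int, mul_one, quadAct_one]

theorem quadAct_neg_int (h : IsNegOneMap σ) (u : G) (n : ℤ) :
    quadAct σ u (-n) = quadAct σ (σ u) n := by
  rw [quadAct, quadAct, h.map_map, choose2Succ_neg, choose2_neg]
  exact ((h.addCommute_map u).zsmul_zsmul _ _).eq

theorem map_quadAct (h : IsNegOneMap σ) (u : G) (n : ℤ) :
    σ (quadAct σ u n) = quadAct σ u (-n) := by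
  rw [h.quadAct_neg_int, quadAct, quadAct, h.map_add, h.map_zsmul, h.map_zsmul, h.map_map]

theorem quadAct_add_natCast (h : IsNegOneMap σ) (u v : G) (m : ℕ) :
    quadAct σ (u + v) m = quadAct σ u m + quadAct σ v m := by
  induction m with
  | zero => simp only [Nat.cast_zero, quadAct_zero, add_zero]
  | succ m ih =>
    have huB : u + quadAct σ v m = quadAct σ v m + u + (m : ℤ) • ⁅u, v⁆ := by
      rw [add_eq_add_add_addCommutatorElement h.addCommutatorElement_central,
        h.addCommutatorElement_quadAct_right]
    have hTu := fun z => (h.add_map_central u z).zsmul_left (m : ℤ)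
    have hTv := fun z => (h.add_map_central v z).zsmul_left (m : ℤ)
    have hC := fun z => (h.addCommutatorElement_central u v z).zsmul_left (m : ℤ)
    rw [Nat.cast_succ, h.quadAct_succ, h.quadAct_succ, h.quadAct_succ, ih,
      add_map_add_eq h.map_add h.addCommutatorElement_central h.addCommutatorElement_map_left,
      ((h.add_map_central u _).add_left (h.add_map_central v _)).zsmul_add,
      (h.add_map_central u _).zsmul_add]
    generalize quadAct σ u m = A, quadAct σ v m = B at huB ⊢
    generalize (m : ℤ) • (u + σ u) = Tu, (m : ℤ) • (v + σ v) = Tv,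
      (m : ℤ) • ⁅u, v⁆ = C at huB hTu hTv hC ⊢
    calc A + B + (Tu + Tv + C) + (u + v)
        = A + B + u + v + C + (Tu + Tv) := by
          rw [((hTu _).add_left (hTv _)).add_left (hC _) |>.right_comm, ← (hC _).eq]
          simp only [add_assoc]
      _ = A + (u + B) + v + (Tu + Tv) := by
          rw [((hC v).symm.right_comm _), huB]; simp only [add_assoc]
      _ = A + u + Tu + (B + v + Tv) := by
          rw [(hTu _).add_add_add_comm]; simp only [add_assoc]
      _ = A + Tu + u + (B + Tv + v) := by
          rw [(hTu u).symm.right_comm, (hTv v).symm.right_comm]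

theorem quadAct_add (h : IsNegOneMap σ) (u v : G) (n : ℤ) :
    quadAct σ (u + v) n = quadAct σ u n + quadAct σ v n := by
  obtain ⟨m, rfl | rfl⟩ := Int.eq_nat_or_neg n
  · exact h.quadAct_add_natCast u v m
  · rw [h.quadAct_neg_int, h.quadAct_neg_int, h.quadAct_neg_int, h.map_add]
    exact h.quadAct_add_natCast _ _ m

theorem quadAct_neg (h : IsNegOneMap σ) (u : G) (n : ℤ) :
    quadAct σ (-u) n = -quadAct σ u n := by
  rw [eq_neg_iff_add_eq_zero, ← h.quadAct_add, neg_add_cancel, h.zero_quadAct]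

theorem add_map_quadAct (h : IsNegOneMap σ) (u : G) (k : ℤ) :
    quadAct σ u k + σ (quadAct σ u k) = (k * k) • (u + σ u) := by
  have hu := h.addCommute_map u
  rw [h.map_quadAct, quadAct, quadAct, choose2Succ_neg, choose2_neg, hu.zsmul_add_zsmul_add,
    add_comm (choose2 k), choose2Succ_add_choose2, ← hu.zsmul_add]

theorem quadAct_quadAct_natCast (h : IsNegOneMap σ) (u : G) (k : ℤ) (m : ℕ) :
    quadAct σ (quadAct σ u k) m = quadAct σ u (k * m) := by
  induction m with
  | zero => simp only [Nat.cast_zero, mul_zero, quadAct_zero]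
  | succ m ih =>
    rw [Nat.cast_succ, h.quadAct_succ, ih, h.add_map_quadAct, mul_add_one, h.quadAct_add_int,
      ← mul_zsmul, mul_right_comm, mul_comm (m : ℤ)]

theorem quadAct_quadAct (h : IsNegOneMap σ) (u : G) (k k' : ℤ) :
    quadAct σ (quadAct σ u k) k' = quadAct σ u (k * k') := by
  obtain ⟨m, rfl | rfl⟩ := Int.eq_nat_or_neg k'
  · exact h.quadAct_quadAct_natCast u k m
  · rw [h.quadAct_neg_int, h.map_quadAct, h.quadAct_quadAct_natCast, neg_mul_comm]

theorem eq_quadAct (h : IsNegOneMap σ) {u : G} {a : ℤ → G} (h1 : a 1 = u) (hm1 : a (-1) = σ u)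
    (hadd : ∀ k k', a (k + k') = a k + (k * k') • (u + σ u) + a k') (n : ℤ) :
    a n = quadAct σ u n := by
  have h0 : a 0 = 0 := by simpa using hadd 0 0
  induction n using Int.induction_on with
  | zero => rw [h0, quadAct_zero]
  | succ n ih => rw [hadd, h1, ih, mul_one, h.quadAct_succ]
  | pred n ih =>
    rw [sub_eq_add_neg, hadd, hm1, ih, h.quadAct_add_int, quadAct_neg_one]

end IsNegOneMap
end NegOneMap

section Indices

variable {ℓ : ℕ} {i j k : ℤ}

theorem adm.neg (h : adm ℓ i) : adm ℓ (-i) :=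
  ⟨neg_ne_zero.mpr h.1, by rw [abs_neg]; exact h.2⟩

theorem adm2.symm (h : adm2 ℓ i j) : adm2 ℓ j i := ⟨h.2.1, h.1, h.2.2.symm⟩

theorem adm2.neg_left (h : adm2 ℓ i j) : adm2 ℓ (-i) j :=
  ⟨h.1.neg, h.2.1, by rw [abs_neg]; exact h.2.2⟩

theorem adm2.neg_right (h : adm2 ℓ i j) : adm2 ℓ i (-j) :=
  ⟨h.1, h.2.1.neg, by rw [abs_neg]; exact h.2.2⟩

theorem adm3.adm2_13 (h : adm3 ℓ i j k) : adm2 ℓ i k := ⟨h.1, h.2.2.1, h.2.2.2.2.1⟩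

theorem adm3.swap23 (h : adm3 ℓ i j k) : adm3 ℓ i k j :=
  ⟨h.1, h.2.2.1, h.2.1, h.2.2.2.2.1, h.2.2.2.1, h.2.2.2.2.2.symm⟩

theorem adm3.swap12 (h : adm3 ℓ i j k) : adm3 ℓ j i k :=
  ⟨h.2.1, h.1, h.2.2.1, h.2.2.2.1.symm, h.2.2.2.2.2, h.2.2.2.2.1⟩

theorem adm3.neg1 (h : adm3 ℓ i j k) : adm3 ℓ (-i) j k :=
  ⟨h.1.neg, h.2.1, h.2.2.1, by rw [abs_neg]; exact h.2.2.2.1, by rw [abs_neg]; exact h.2.2.2.2.1,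
    h.2.2.2.2.2⟩

theorem adm3.neg2 (h : adm3 ℓ i j k) : adm3 ℓ i (-j) k := h.swap12.neg1.swap12

theorem exists_adm_abs_ne (hl : 3 ≤ ℓ) (A B : ℤ) :
    ∃ k, adm ℓ k ∧ |k| ≠ A ∧ |k| ≠ B := by
  obtain ⟨k, hk1, hk3, hA, hB⟩ : ∃ k : ℤ, 1 ≤ k ∧ k ≤ 3 ∧ k ≠ A ∧ k ≠ B := by
    by_cases h1 : 1 ≠ A ∧ 1 ≠ B
    · exact ⟨1, le_rfl, by norm_num, h1⟩
    by_cases h2 : 2 ≠ A ∧ 2 ≠ B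
    · exact ⟨2, by norm_num, by norm_num, h2⟩
    exact ⟨3, by norm_num, le_rfl, by omega, by omega⟩
  rw [← abs_of_pos (by omega : 0 < k)] at hA hB
  exact ⟨k, ⟨by omega, by rw [abs_of_pos (by omega : 0 < k)]; omega⟩, hA, hB⟩

theorem adm2.exists_adm3 (hl : 3 ≤ ℓ) (h : adm2 ℓ i j) : ∃ k, adm3 ℓ i j k := by
  obtain ⟨k, hk, hki, hkj⟩ := exists_adm_abs_ne hl |i| |j|
  exact ⟨k, h.1, h.2.1, hk, h.2.2, hki.symm, hkj.symm⟩

end Indices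

section Transport

variable {F : ℤ → ℤ → Type} [∀ i j, AddGroup (F i j)] {i j i' j' : ℤ}

theorem rc2_zero (hi : i = i') (hj : j = j') : rc2 (F := F) hi hj 0 = 0 := by
  subst hi hj; rfl

theorem rc2_neg (hi : i = i') (hj : j = j') (a : F i j) :
    rc2 (F := F) hi hj (-a) = -rc2 (F := F) hi hj a := by
  subst hi hj; rfl

theorem rc2_zsmul (hi : i = i') (hj : j = j') (n : ℤ) (a : F i j) :
    rc2 (F := F) hi hj (n • a) = n • rc2 (F := F) hi hj a := by
  subst hi hj; rfl

end Transport

namespace PGOFR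

variable {ℓ : ℕ} (o : PGOFR ℓ) {i j k : ℤ}

theorem inv_zero (h : adm2 ℓ i j) : o.inv i j 0 = 0 := by
  have h0 := o.inv_add i j h 0 0
  rw [add_zero] at h0
  exact add_eq_left.mp h0.symm

theorem inv_neg (h : adm2 ℓ i j) (a : o.R i j) : o.inv i j (-a) = -o.inv i j a := by
  have h0 := o.inv_add i j h a (-a)
  rw [add_neg_cancel, o.inv_zero h] at h0
  exact eq_neg_of_add_eq_zero_left h0.symm

theorem mul_zero_left (h : adm3 ℓ i j k) (b : o.R j k) : o.mul i j k 0 b = 0 :=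
  (AddMonoidHom.mk' (o.mul i j k · b) (o.r2 i j k h · · b)).map_zero

theorem mul_neg_left (h : adm3 ℓ i j k) (a : o.R i j) (b : o.R j k) :
    o.mul i j k (-a) b = -o.mul i j k a b :=
  (AddMonoidHom.mk' (o.mul i j k · b) (o.r2 i j k h · · b)).map_neg a

theorem mul_neg_right (h : adm3 ℓ i j k) (a : o.R i j) (b : o.R j k) :
    o.mul i j k a (-b) = -o.mul i j k a b :=
  (AddMonoidHom.mk' (o.mul i j k a) (o.r3 i j k h a)).map_neg b

theorem mul_zsmul_left (h : adm3 ℓ i j k) (n : ℤ) (a : o.R i j) (b : o.R j k) :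
    o.mul i j k (n • a) b = n • o.mul i j k a b :=
  (AddMonoidHom.mk' (o.mul i j k · b) (o.r2 i j k h · · b)).map_zsmul n a

theorem mul_zsmul_right (h : adm3 ℓ i j k) (n : ℤ) (a : o.R i j) (b : o.R j k) :
    o.mul i j k a (n • b) = n • o.mul i j k a b :=
  (AddMonoidHom.mk' (o.mul i j k a) (o.r3 i j k h a)).map_zsmul n b

theorem star_zero_left (h : adm2 ℓ i j) (b : o.R j i) : o.star i j 0 b = 0 :=
  (AddMonoidHom.mk' (o.star i j · b) (o.r6 i j h · · b)).map_zero

theorem star_zero_right (h : adm2 ℓ i j) (a : o.R (-i) j) : o.star i j a 0 = 0 :=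
  (AddMonoidHom.mk' (o.star i j a) (o.r7 i j h a)).map_zero

theorem star_neg_left (h : adm2 ℓ i j) (a : o.R (-i) j) (b : o.R j i) :
    o.star i j (-a) b = -o.star i j a b :=
  (AddMonoidHom.mk' (o.star i j · b) (o.r6 i j h · · b)).map_neg a

theorem star_neg_right (h : adm2 ℓ i j) (a : o.R (-i) j) (b : o.R j i) :
    o.star i j a (-b) = -o.star i j a b :=
  (AddMonoidHom.mk' (o.star i j a) (o.r7 i j h a)).map_neg b

theorem star_zsmul_left (h : adm2 ℓ i j) (n : ℤ) (a : o.R (-i) j) (b : o.R j i) :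
    o.star i j (n • a) b = n • o.star i j a b :=
  (AddMonoidHom.mk' (o.star i j · b) (o.r6 i j h · · b)).map_zsmul n a

theorem star_zsmul_right (h : adm2 ℓ i j) (n : ℤ) (a : o.R (-i) j) (b : o.R j i) :
    o.star i j a (n • b) = n • o.star i j a b :=
  (AddMonoidHom.mk' (o.star i j a) (o.r7 i j h a)).map_zsmul n b

theorem circ_zero_left (h : adm2 ℓ i j) (v : o.Δ j) : o.circ i j 0 v = 0 :=
  (AddMonoidHom.mk' (o.circ i j · v) (o.r10 i j h · · v)).map_zero

theorem circ_zero_right (h : adm2 ℓ i j) (u : o.Δ i) : o.circ i j u 0 = 0 :=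
  (AddMonoidHom.mk' (o.circ i j u) (o.r11 i j h u)).map_zero

theorem circ_neg_left (h : adm2 ℓ i j) (u : o.Δ i) (v : o.Δ j) :
    o.circ i j (-u) v = -o.circ i j u v :=
  (AddMonoidHom.mk' (o.circ i j · v) (o.r10 i j h · · v)).map_neg u

theorem circ_neg_right (h : adm2 ℓ i j) (u : o.Δ i) (v : o.Δ j) :
    o.circ i j u (-v) = -o.circ i j u v :=
  (AddMonoidHom.mk' (o.circ i j u) (o.r11 i j h u)).map_neg v

theorem circ_zsmul_left (h : adm2 ℓ i j) (n : ℤ) (u : o.Δ i) (v : o.Δ j) :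
    o.circ i j (n • u) v = n • o.circ i j u v :=
  (AddMonoidHom.mk' (o.circ i j · v) (o.r10 i j h · · v)).map_zsmul n u

theorem tri_zsmul_right (h : adm2 ℓ i j) (n : ℤ) (u : o.Δ i) (a : o.R i j) :
    o.tri i j u (n • a) = n • o.tri i j u a :=
  (AddMonoidHom.mk' (o.tri i j u) (o.r17 i j h u)).map_zsmul n a

theorem dot_zero_left (h : adm2 ℓ i j) (a : o.R i j) : o.dot i j 0 a = 0 :=
  (AddMonoidHom.mk' (o.dot i j · a) (o.r15 i j h · · a)).map_zero

theorem dot_neg_left (h : adm2 ℓ i j) (u : o.Δ i) (a : o.R i j) :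
    o.dot i j (-u) a = -o.dot i j u a :=
  (AddMonoidHom.mk' (o.dot i j · a) (o.r15 i j h · · a)).map_neg u

theorem dot_zsmul_left (h : adm2 ℓ i j) (n : ℤ) (u : o.Δ i) (a : o.R i j) :
    o.dot i j (n • u) a = n • o.dot i j u a :=
  (AddMonoidHom.mk' (o.dot i j · a) (o.r15 i j h · · a)).map_zsmul n u

theorem tri_zero_left (h : adm2 ℓ i j) (a : o.R i j) : o.tri i j 0 a = 0 := by
  have h0 := o.r16 i j h 0 0 a
  rw [add_zero, o.circ_zero_left h, add_zero] at h0
  exact add_eq_right.mp h0.symm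

theorem dot_zero_right (h : adm2 ℓ i j) (u : o.Δ i) : o.dot i j u 0 = 0 := by
  have h0 := o.r18 i j h u 0 0
  rw [add_zero, o.inv_zero h, o.star_zero_left h.symm.neg_right, add_zero] at h0
  exact add_eq_right.mp h0.symm

theorem star_addCommute (h : adm2 ℓ i j) (a : o.R (-i) j) (b : o.R j i) (u : o.Δ i) :
    AddCommute (o.star i j a b) u :=
  o.r5 i j h a b u

theorem dot_add_dot_neg (h : adm2 ℓ i j) (u : o.Δ i) (a : o.R i j) :
    o.dot i j u a + o.dot i j u (-a) = o.star j (-i) (o.inv i j a) (o.tri i j u a) := by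
  have h0 := o.r18 i j h u a (-a)
  rw [add_neg_cancel, o.dot_zero_right h, o.inv_neg h, o.star_neg_left h.symm.neg_right,
    ((o.star_addCommute h.symm.neg_right _ _ _).neg_left).right_comm] at h0
  exact add_neg_eq_zero.mp h0.symm

theorem circ_eq_inv_circ (h : adm2 ℓ i j) (u : o.Δ i) (v : o.Δ j) :
    o.circ i j u v = rc2 (F := o.R) rfl (neg_neg j) (o.inv (-j) i (o.circ j i v u)) :=
  (o.r12 j i h.symm v u).symm

theorem circ_eq_zero_of_circ_swap_eq_zero (h : adm2 ℓ i j) {u : o.Δ i} {v : o.Δ j}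
    (huv : o.circ j i v u = 0) : o.circ i j u v = 0 := by
  rw [o.circ_eq_inv_circ h, huv, o.inv_zero h.symm.neg_left, rc2_zero]

theorem tri_neg (h : adm2 ℓ i j) (u : o.Δ i) (a : o.R i j) :
    o.tri i j (-u) a = o.circ i j u (o.dot i j u (-a)) - o.tri i j u a := by
  have h0 := o.r16 i j h (-u) u a
  rw [neg_add_cancel, o.tri_zero_left h, o.circ_neg_left h] at h0
  rw [← neg_eq_of_add_eq_zero_right h0.symm, neg_add_rev, neg_neg, sub_eq_add_neg]

theorem addCommutatorElement_dot (h : adm2 ℓ j i) (w : o.Δ j) (b : o.R j i) (v : o.Δ i) :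
    ⁅o.dot j i w b, v⁆ = -o.star i (-j) (o.inv j i b) (o.circ j i w v) := by
  have hS := fun z =>
    (o.star_addCommute h.symm.neg_right (o.inv j i b) (o.circ j i w v) z).neg_left
  rw [addCommutatorElement_def, o.r14 j i h w b v, sub_eq_add_neg, add_assoc (v + _),
    (hS _).eq, ← add_assoc, add_neg_cancel_right, ← (hS v).eq, add_neg_cancel_right]

theorem star_mem_Dmin (h : adm2 ℓ i j) (a : o.R (-i) j) (b : o.R j i) :
    o.star i j a b ∈ o.Dmin i :=
  AddSubgroup.subset_closure ⟨j, h, a, b, rfl⟩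

theorem addCommute_of_mem_Dmin {v : o.Δ i} (hv : v ∈ o.Dmin i) (u : o.Δ i) :
    AddCommute v u := by
  induction hv using AddSubgroup.closure_induction with
  | mem x hx => obtain ⟨j, hij, a, b, rfl⟩ := hx; exact o.star_addCommute hij a b u
  | zero => exact AddCommute.zero_left u
  | add x y _ _ hx hy => exact hx.add_left hy
  | neg x _ hx => exact hx.neg_left

theorem Dmin_normal (i : ℤ) : (o.Dmin i).Normal :=
  ⟨fun v hv u => by rwa [← (o.addCommute_of_mem_Dmin hv u).eq, add_neg_cancel_right]⟩

end PGOFR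

structure NegOneData (ℓ : ℕ) where
  o : PGOFR ℓ
  three_le : 3 ≤ ℓ
  cond29 : o.cond29
  cond30 : o.cond30
  neg1 : ∀ i, o.Δ i → o.Δ i
  neg1_add : ∀ i, adm ℓ i → ∀ u v : o.Δ i, neg1 i (u + v) = neg1 i u + neg1 i v
  neg1_star : ∀ i j, adm2 ℓ i j → ∀ (a : o.R (-i) j) (b : o.R j i),
    neg1 i (o.star i j a b) = o.star i j a b
  neg1_dot : ∀ i j, adm2 ℓ i j → ∀ (u : o.Δ j) (b : o.R j i),
    neg1 i (o.dot j i u b) = o.dot j i u (-b)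

namespace NegOneData

variable {ℓ : ℕ} (N : NegOneData ℓ) {i j k : ℤ}

theorem R_induction (hk : adm3 ℓ i j k) {P : N.o.R i j → Prop} (zero : P 0)
    (add : ∀ a b, P a → P b → P (a + b)) (neg : ∀ a, P a → P (-a))
    (mul : ∀ a b, P (N.o.mul i k j a b)) (mul' : ∀ a b, P (N.o.mul i (-k) j a b))
    (x : N.o.R i j) : P x := by
  have hx : x ∈ AddSubgroup.closure _ := N.cond29 i j k hk ▸ AddSubgroup.mem_top x
  refine AddSubgroup.closure_induction ?_ zero (fun a b _ _ => add a b) (fun a _ => neg a) hx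
  rintro y (⟨a, b, rfl⟩ | ⟨a, b, rfl⟩)
  exacts [mul a b, mul' a b]

theorem Δ_induction (h : adm2 ℓ i j) {P : N.o.Δ i → Prop} (zero : P 0)
    (add : ∀ u v, P u → P v → P (u + v)) (neg : ∀ u, P u → P (-u))
    (dot : ∀ (w : N.o.Δ j) b, P (N.o.dot j i w b))
    (dot' : ∀ (w : N.o.Δ (-j)) b, P (N.o.dot (-j) i w b))
    (star : ∀ a b, P (N.o.star i j a b)) (u : N.o.Δ i) : P u := by
  have hu : u ∈ AddSubgroup.closure _ := N.cond30 i j h ▸ AddSubgroup.mem_top u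
  refine AddSubgroup.closure_induction ?_ zero (fun a b _ _ => add a b) (fun a _ => neg a) hu
  rintro x ((⟨w, b, rfl⟩ | ⟨w, b, rfl⟩) | ⟨a, b, rfl⟩)
  exacts [dot w b, dot' w b, star a b]

theorem Δ_induction_of_abs_ne (hi : adm ℓ i) (A : ℤ) {P : N.o.Δ i → Prop} (zero : P 0)
    (add : ∀ u v, P u → P v → P (u + v)) (neg : ∀ u, P u → P (-u))
    (dot : ∀ j, adm2 ℓ i j → |j| ≠ A → ∀ (w : N.o.Δ j) b, P (N.o.dot j i w b))
    (star : ∀ j, adm2 ℓ i j → |j| ≠ A → ∀ a b, P (N.o.star i j a b)) (u : N.o.Δ i) :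
    P u := by
  obtain ⟨j, hj, hji, hjA⟩ := exists_adm_abs_ne N.three_le |i| A
  have hij : adm2 ℓ i j := ⟨hi, hj, hji.symm⟩
  exact N.Δ_induction hij zero add neg (dot j hij hjA) (dot (-j) hij.neg_right (by rwa [abs_neg]))
    (star j hij hjA) u

theorem R_addCommute (h : adm2 ℓ i j) (a b : N.o.R i j) : AddCommute a b := by
  obtain ⟨k, hk⟩ := h.exists_adm3 N.three_le
  induction a using N.R_induction hk with
  | zero => exact AddCommute.zero_left b
  | add a a' ha ha' => exact ha.add_left ha'
  | neg a ha => exact ha.neg_left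
  | mul a a' => exact N.o.r1 i k j hk.swap23 a a' b
  | mul' a a' => exact N.o.r1 i (-k) j hk.swap23.neg2 a a' b

theorem inv_zsmul (h : adm2 ℓ i j) (n : ℤ) (a : N.o.R i j) :
    N.o.inv i j (n • a) = n • N.o.inv i j a :=
  (AddMonoidHom.mk' (N.o.inv i j) fun a b => by
    rw [N.o.inv_add i j h, N.R_addCommute h.symm.neg_left.neg_right]).map_zsmul n a

theorem Dmin_induction_of_abs_ne (A : ℤ) {P : N.o.Δ i → Prop} (zero : P 0)
    (add : ∀ u v, P u → P v → P (u + v)) (neg : ∀ u, P u → P (-u))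
    (star : ∀ m, adm2 ℓ i m → |m| ≠ A → ∀ a b, P (N.o.star i m a b)) {v : N.o.Δ i}
    (hv : v ∈ N.o.Dmin i) : P v := by
  refine AddSubgroup.closure_induction ?_ zero (fun a b _ _ => add a b) (fun a _ => neg a) hv
  rintro x ⟨k, hik, a, b, rfl⟩
  by_cases hkA : |k| = A
  · obtain ⟨m, hm⟩ := hik.exists_adm3 N.three_le
    have hmA : |m| ≠ A := hkA ▸ hm.2.2.2.2.2.symm
    induction a using N.R_induction hm.neg1 with
    | zero => rw [N.o.star_zero_left hik]; exact zero
    | add a a' ha ha' => rw [N.o.r6 i k hik]; exact add _ _ ha ha'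
    | neg a ha => rw [N.o.star_neg_left hik]; exact neg _ ha
    | mul a₁ a₂ => rw [N.o.r20 i m k hm.swap23 a₁ a₂ b]; exact star m hm.adm2_13 hmA _ _
    | mul' a₁ a₂ =>
      rw [N.o.r20 i (-m) k hm.swap23.neg2 a₁ a₂ b]
      exact star (-m) hm.adm2_13.neg_right (by rwa [abs_neg]) _ _
  · exact star k hik hkA a b

theorem circ_eq_zero_of_mem_Dmin (h : adm2 ℓ i j) {v : N.o.Δ i} (hv : v ∈ N.o.Dmin i)
    (u : N.o.Δ j) : N.o.circ i j v u = 0 := by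
  refine N.Dmin_induction_of_abs_ne (P := fun x => N.o.circ i j x u = 0) |j|
    (N.o.circ_zero_left h u) ?_ ?_ ?_ hv
  · intro x y hx hy; rw [N.o.r10 i j h, hx, hy, add_zero]
  · intro x hx; rw [N.o.circ_neg_left h, hx, neg_zero]
  · intro m him hmj a b
    exact N.o.circ_eq_zero_of_circ_swap_eq_zero h
      (N.o.r21 j i m ⟨h.2.1, h.1, him.2.1, h.2.2.symm, hmj.symm, him.2.2⟩ u a b)

theorem dot_mem_Dmin (h : adm2 ℓ i j) {v : N.o.Δ i} (hv : v ∈ N.o.Dmin i) (a : N.o.R i j) :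
    N.o.dot i j v a ∈ N.o.Dmin j := by
  refine N.Dmin_induction_of_abs_ne (P := fun x => N.o.dot i j x a ∈ N.o.Dmin j) |j|
    ?_ ?_ ?_ ?_ hv
  · rw [N.o.dot_zero_left h]; exact zero_mem _
  · intro x y hx hy; rw [N.o.r15 i j h]; exact add_mem hx hy
  · intro x hx; rw [N.o.dot_neg_left h]; exact neg_mem hx
  · intro m him hmj a' b'
    rw [N.o.r25 i m j ⟨h.1, him.2.1, h.2.1, him.2.2, h.2.2, hmj⟩ a' b' a]
    exact N.o.star_mem_Dmin ⟨h.2.1, him.2.1, hmj.symm⟩ _ _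

/-- Modulo `Dmin i` the generators `w·b` of `Δ i` are central by (R14), hence so is every
element. -/
theorem addCommutatorElement_mem_Dmin (hi : adm ℓ i) (u v : N.o.Δ i) :
    ⁅u, v⁆ ∈ N.o.Dmin i := by
  have := N.o.Dmin_normal i
  have hcenter (w : N.o.Δ i) : (w : N.o.Δ i ⧸ N.o.Dmin i) ∈ AddSubgroup.center _ := by
    induction w using N.Δ_induction_of_abs_ne hi 0 with
    | zero => exact zero_mem _
    | add x y hx hy => exact add_mem hx hy
    | neg x hx => exact neg_mem hx
    | dot j hij _ w b =>
      refine (QuotientAddGroup.mk_mem_center_iff _ _).mpr fun z => ?_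
      rw [N.o.addCommutatorElement_dot hij.symm]
      exact neg_mem (N.o.star_mem_Dmin hij.neg_right _ _)
    | star j hij _ a b =>
      refine (QuotientAddGroup.mk_mem_center_iff _ _).mpr fun z => ?_
      rw [(N.o.star_addCommute hij a b z).addCommutator_eq]
      exact zero_mem _
  exact (QuotientAddGroup.mk_mem_center_iff _ _).mp (hcenter u) v

theorem addCommutatorElement_central (hi : adm ℓ i) (u v z : N.o.Δ i) :
    AddCommute ⁅u, v⁆ z :=
  N.o.addCommute_of_mem_Dmin (N.addCommutatorElement_mem_Dmin hi u v) z

theorem neg1_zero (hi : adm ℓ i) : N.neg1 i 0 = 0 :=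
  (AddMonoidHom.mk' (N.neg1 i) (N.neg1_add i hi)).map_zero

theorem neg1_neg (hi : adm ℓ i) (u : N.o.Δ i) : N.neg1 i (-u) = -N.neg1 i u :=
  (AddMonoidHom.mk' (N.neg1 i) (N.neg1_add i hi)).map_neg u

theorem neg1_eq_of_mem_Dmin (hi : adm ℓ i) {v : N.o.Δ i} (hv : v ∈ N.o.Dmin i) :
    N.neg1 i v = v := by
  refine N.Dmin_induction_of_abs_ne (P := fun x => N.neg1 i x = x) 0 (N.neg1_zero hi) ?_ ?_
    (fun m him _ => N.neg1_star i m him) hv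
  · intro x y hx hy; rw [N.neg1_add i hi, hx, hy]
  · intro x hx; rw [N.neg1_neg hi, hx]

theorem neg1_neg1 (hi : adm ℓ i) (u : N.o.Δ i) : N.neg1 i (N.neg1 i u) = u := by
  induction u using N.Δ_induction_of_abs_ne hi 0 with
  | zero => rw [N.neg1_zero hi, N.neg1_zero hi]
  | add x y hx hy => rw [N.neg1_add i hi, N.neg1_add i hi, hx, hy]
  | neg x hx => rw [N.neg1_neg hi, N.neg1_neg hi, hx]
  | dot j hij _ w b => rw [N.neg1_dot i j hij, N.neg1_dot i j hij, neg_neg]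
  | star j hij _ a b => rw [N.neg1_star i j hij, N.neg1_star i j hij]

theorem addCommutatorElement_neg1_left (hi : adm ℓ i) (u v : N.o.Δ i) :
    ⁅N.neg1 i u, v⁆ = -⁅u, v⁆ := by
  have hc := N.addCommutatorElement_central hi
  induction u using N.Δ_induction_of_abs_ne hi 0 with
  | zero => rw [N.neg1_zero hi, addCommutatorElement_zero_left, neg_zero]
  | add x y hx hy =>
    rw [N.neg1_add i hi, addCommutatorElement_add_left hc, hx, hy, addCommutatorElement_add_left hc,
      neg_add_rev, ((hc _ _ _).neg_left.neg_right).eq]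
  | neg x hx =>
    rw [N.neg1_neg hi, addCommutatorElement_neg_left' hc, hx, addCommutatorElement_neg_left' hc]
  | dot j hij _ w b =>
    rw [N.neg1_dot i j hij, N.o.addCommutatorElement_dot hij.symm,
      N.o.addCommutatorElement_dot hij.symm, N.o.inv_neg hij.symm,
      N.o.star_neg_left hij.neg_right, neg_neg]
  | star j hij _ a b =>
    rw [N.neg1_star i j hij, (N.o.star_addCommute hij a b v).addCommutator_eq, neg_zero]

theorem add_neg1_mem_Dmin (hi : adm ℓ i) (u : N.o.Δ i) : u + N.neg1 i u ∈ N.o.Dmin i := by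
  induction u using N.Δ_induction_of_abs_ne hi 0 with
  | zero => rw [N.neg1_zero hi, add_zero]; exact zero_mem _
  | add x y hx hy =>
    rw [add_map_add_eq (N.neg1_add i hi) (N.addCommutatorElement_central hi)
      (N.addCommutatorElement_neg1_left hi)]
    exact add_mem (add_mem hx hy) (N.addCommutatorElement_mem_Dmin hi x y)
  | neg x hx =>
    have hcomm := N.addCommutatorElement_neg1_left hi x x
    rw [addCommutatorElement_self, neg_zero, addCommutatorElement_eq_zero_iff_add_comm] at hcomm
    rw [N.neg1_neg hi, ← neg_add_rev, hcomm]
    exact neg_mem hx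
  | dot j hij _ w b =>
    rw [N.neg1_dot i j hij, N.o.dot_add_dot_neg hij.symm]
    exact N.o.star_mem_Dmin hij.neg_right _ _
  | star j hij _ a b =>
    rw [N.neg1_star i j hij]
    exact add_mem (N.o.star_mem_Dmin hij a b) (N.o.star_mem_Dmin hij a b)

theorem isNegOneMap (hi : adm ℓ i) : IsNegOneMap (N.neg1 i) where
  map_add := N.neg1_add i hi
  map_map := N.neg1_neg1 hi
  addCommutatorElement_central := N.addCommutatorElement_central hi
  addCommutatorElement_map_left := N.addCommutatorElement_neg1_left hi
  add_map_central u := N.o.addCommute_of_mem_Dmin (N.add_neg1_mem_Dmin hi u)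

theorem circ_neg1_left (h : adm2 ℓ i j) (u : N.o.Δ i) (v : N.o.Δ j) :
    N.o.circ i j (N.neg1 i u) v = -N.o.circ i j u v := by
  induction u using N.Δ_induction_of_abs_ne h.1 |j| with
  | zero => rw [N.neg1_zero h.1, N.o.circ_zero_left h, neg_zero]
  | add x y hx hy =>
    rw [N.neg1_add i h.1, N.o.r10 i j h, hx, hy, N.o.r10 i j h, neg_add_rev,
      N.R_addCommute h.neg_left]
  | neg x hx => rw [N.neg1_neg h.1, N.o.circ_neg_left h, hx, N.o.circ_neg_left h]
  | dot k hik hkj w b =>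
    have hjki : adm3 ℓ j k i := ⟨h.2.1, hik.2.1, h.1, hkj.symm, h.2.2.symm, hik.2.2.symm⟩
    rw [N.neg1_dot i k hik, N.o.circ_eq_inv_circ h, N.o.circ_eq_inv_circ h, N.o.r22 j k i hjki,
      N.o.r22 j k i hjki, N.o.mul_neg_right hjki.neg1, N.o.inv_neg h.symm.neg_left, rc2_neg]
  | star k hik _ a b =>
    rw [N.neg1_star i k hik, N.circ_eq_zero_of_mem_Dmin h (N.o.star_mem_Dmin hik a b), neg_zero]

theorem circ_neg1_right (h : adm2 ℓ i j) (u : N.o.Δ i) (v : N.o.Δ j) :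
    N.o.circ i j u (N.neg1 j v) = -N.o.circ i j u v := by
  rw [N.o.circ_eq_inv_circ h, N.circ_neg1_left h.symm, N.o.inv_neg h.symm.neg_left, rc2_neg,
    ← N.o.circ_eq_inv_circ h]

theorem dot_neg1 (h : adm2 ℓ i j) (u : N.o.Δ i) (b : N.o.R i j) :
    N.o.dot i j (N.neg1 i u) b = N.o.dot i j u (-b) := by
  induction u using N.Δ_induction_of_abs_ne h.1 |j| with
  | zero => rw [N.neg1_zero h.1, N.o.dot_zero_left h, N.o.dot_zero_left h]
  | add x y hx hy => rw [N.neg1_add i h.1, N.o.r15 i j h, hx, hy, N.o.r15 i j h]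
  | neg x hx => rw [N.neg1_neg h.1, N.o.dot_neg_left h, hx, N.o.dot_neg_left h]
  | dot k hik hkj w b₀ =>
    have hkij : adm3 ℓ k i j := ⟨hik.2.1, h.1, h.2.1, hik.2.2.symm, hkj, h.2.2⟩
    rw [N.neg1_dot i k hik, N.o.r28 k i j hkij, N.o.r28 k i j hkij, N.o.mul_neg_left hkij,
      N.o.mul_neg_right hkij]
  | star k hik hkj a' b' =>
    have hikj : adm3 ℓ i k j := ⟨h.1, hik.2.1, h.2.1, hik.2.2, h.2.2, hkj⟩
    have hjk : adm2 ℓ j k := ⟨h.2.1, hik.2.1, hkj.symm⟩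
    rw [N.neg1_star i k hik, N.o.r25 i k j hikj, N.o.r25 i k j hikj, N.o.inv_neg h,
      N.o.mul_neg_left hikj.swap23.swap12.neg2.neg1, N.o.star_neg_left hjk,
      N.o.mul_neg_right hikj.swap12, N.o.star_neg_right hjk, neg_neg]

theorem quadAct_dot (h : adm2 ℓ i j) (u : N.o.Δ i) (b : N.o.R i j) (n : ℤ) :
    quadAct (N.neg1 j) (N.o.dot i j u b) n = N.o.dot i j u (n • b) := by
  refine ((N.isNegOneMap h.2.1).eq_quadAct (a := fun n => N.o.dot i j u (n • b))
    (by rw [one_zsmul]) (by rw [neg_one_zsmul, N.neg1_dot j i h.symm]) (fun k k' => ?_) n).symm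
  rw [add_zsmul, N.o.r18 i j h, N.neg1_dot j i h.symm, N.o.dot_add_dot_neg h, N.inv_zsmul h,
    N.o.tri_zsmul_right h, N.o.star_zsmul_left h.symm.neg_right,
    N.o.star_zsmul_right h.symm.neg_right, ← mul_zsmul, mul_comm k']

theorem dot_quadAct (h : adm2 ℓ i j) (u : N.o.Δ i) (a : N.o.R i j) (n : ℤ) :
    N.o.dot i j (quadAct (N.neg1 i) u n) a = N.o.dot i j u (n • a) := by
  rw [← N.quadAct_dot h, quadAct, quadAct, N.o.r15 i j h, N.o.dot_zsmul_left h,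
    N.o.dot_zsmul_left h, N.dot_neg1 h, N.neg1_dot j i h.symm]

theorem circ_quadAct_left (h : adm2 ℓ i j) (n : ℤ) (u : N.o.Δ i) (v : N.o.Δ j) :
    N.o.circ i j (quadAct (N.neg1 i) u n) v = n • N.o.circ i j u v :=
  map_quadAct_of_map_neg (AddMonoidHom.mk' (N.o.circ i j · v) (N.o.r10 i j h · · v))
    (N.circ_neg1_left h · v) u n

theorem circ_quadAct_right (h : adm2 ℓ i j) (n : ℤ) (u : N.o.Δ i) (v : N.o.Δ j) :
    N.o.circ i j u (quadAct (N.neg1 j) v n) = n • N.o.circ i j u v :=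
  map_quadAct_of_map_neg (AddMonoidHom.mk' (N.o.circ i j u) (N.o.r11 i j h u))
    (N.circ_neg1_right h u) v n

theorem circ_quadAct_dot_quadAct (h : adm2 ℓ i j) (n : ℤ) (u u' : N.o.Δ i) (a : N.o.R i j) :
    N.o.circ i j (quadAct (N.neg1 i) u n) (N.o.dot i j (quadAct (N.neg1 i) u' n) a) =
      (n * n) • N.o.circ i j u (N.o.dot i j u' a) := by
  rw [N.circ_quadAct_left h, N.dot_quadAct h, ← N.quadAct_dot h, N.circ_quadAct_right h,
    mul_zsmul]

theorem tri_add_left_of_circ_eq_zero (h : adm2 ℓ i j) {v : N.o.Δ i}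
    (hv : ∀ x : N.o.Δ j, N.o.circ i j v x = 0) (w : N.o.Δ i) (a : N.o.R i j) :
    N.o.tri i j (v + w) a = N.o.tri i j v a + N.o.tri i j w a := by
  rw [N.o.r16 i j h, hv, add_zero, N.R_addCommute h.neg_left]

theorem tri_zsmul_left_of_circ_eq_zero (h : adm2 ℓ i j) {v : N.o.Δ i}
    (hv : ∀ x : N.o.Δ j, N.o.circ i j v x = 0) (n : ℤ) (a : N.o.R i j) :
    N.o.tri i j (n • v) a = n • N.o.tri i j v a := by
  have hf := eq_zsmul_of_map_add (f := fun n : ℤ => N.o.tri i j (n • v) a) (fun m n => by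
    rw [add_zsmul, N.tri_add_left_of_circ_eq_zero h fun x => by
      rw [N.o.circ_zsmul_left h, hv, zsmul_zero]]) n
  rwa [one_zsmul] at hf

theorem tri_dot (h : adm3 ℓ k i j) (w : N.o.Δ k) (b : N.o.R k i) (a : N.o.R i j) :
    N.o.tri i j (N.o.dot k i w b) a =
      -N.o.mul (-i) (-k) j (N.o.inv k i b) (N.o.tri k j w (N.o.mul k i j b (-a))) -
      N.o.mul (-i) k j (rc2 (F := N.o.R) rfl (neg_neg k) (N.o.inv (-k) i (N.o.tri k i w b)))
        (N.o.mul k i j b (-a)) -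
      N.o.mul (-i) k j (rc2 (F := N.o.R) rfl (neg_neg k) (N.o.inv (-k) i (N.o.tri k i w b)))
        (N.o.mul k i j b a) := by
  have hij : adm2 ℓ i j := ⟨h.2.1, h.2.2.1, h.2.2.2.2.2⟩
  have h23 := N.o.r23 k i j h w b (N.o.mul k i j b (-a))
  rw [add_assoc] at h23
  have hsplit : N.o.tri i j (N.o.dot k i w b) a =
      N.o.circ i j (N.o.dot k i w b) (N.o.dot i j (N.o.dot k i w b) (-a)) -
        N.o.tri i j (-N.o.dot k i w b) a := by
    rw [eq_sub_iff_add_eq, N.R_addCommute hij.neg_left, N.o.tri_neg hij, sub_add_cancel]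
  rw [hsplit, N.o.r27 k i j h, N.o.r28 k i j h, sub_left_inj, eq_sub_iff_add_eq,
    ← neg_eq_of_add_eq_zero_right h23]

theorem tri_quadAct (h : adm2 ℓ i j) (n : ℤ) (u : N.o.Δ i) (a : N.o.R i j) :
    N.o.tri i j (quadAct (N.neg1 i) u n) a = (n * n) • N.o.tri i j u a := by
  have hσ := N.isNegOneMap h.1
  have hR := N.R_addCommute h.neg_left
  induction u using N.Δ_induction_of_abs_ne h.1 |j| with
  | zero => rw [hσ.zero_quadAct, N.o.tri_zero_left h, zsmul_zero]
  | add x y hx hy =>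
    rw [hσ.quadAct_add, N.o.r16 i j h, hx, hy, N.circ_quadAct_dot_quadAct h, N.o.r16 i j h,
      (hR _ _).zsmul_add, (hR _ _).zsmul_add]
  | neg x hx =>
    rw [hσ.quadAct_neg, N.o.tri_neg h, N.o.tri_neg h, hx, N.circ_quadAct_dot_quadAct h,
      sub_eq_add_neg, sub_eq_add_neg, (hR _ _).zsmul_add, zsmul_neg]
  | dot k hik hkj w b =>
    have hkij : adm3 ℓ k i j := ⟨hik.2.1, h.1, h.2.1, hik.2.2.symm, hkj, h.2.2⟩
    have hki := hik.symm
    have h3 : adm3 ℓ (-i) k j := hkij.swap12.neg1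
    rw [N.quadAct_dot hki, N.tri_dot hkij, N.tri_dot hkij, N.o.tri_zsmul_right hki,
      N.inv_zsmul hki.neg_left, rc2_zsmul, N.inv_zsmul hki, N.o.mul_zsmul_left hkij,
      N.o.mul_zsmul_left hkij, N.o.tri_zsmul_right ⟨hik.2.1, h.2.1, hkj⟩,
      N.o.mul_zsmul_left h3.neg2, N.o.mul_zsmul_right h3.neg2, N.o.mul_zsmul_left h3,
      N.o.mul_zsmul_left h3, N.o.mul_zsmul_right h3, N.o.mul_zsmul_right h3, ← mul_zsmul,
      ← mul_zsmul, ← mul_zsmul]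
    simp only [sub_eq_add_neg, (hR _ _).zsmul_add, zsmul_neg]
  | star k hik _ a' b' =>
    rw [quadAct_of_map_eq (N.neg1_star i k hik a' b'), N.tri_zsmul_left_of_circ_eq_zero h
      (N.circ_eq_zero_of_mem_Dmin h (N.o.star_mem_Dmin hik a' b'))]

/-- The conditions on a family `D i ≤ Δ i` under which it is the augmentation of a partial
graded odd form `ℤ`-algebra structure with the action `quadAct`. -/
structure IsAugmentation (D : ∀ i, AddSubgroup (N.o.Δ i)) : Prop where
  Dmin_le : ∀ i, adm ℓ i → N.o.Dmin i ≤ D i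
  central : ∀ i, adm ℓ i → ∀ v ∈ D i, ∀ u : N.o.Δ i, u + v = v + u
  neg1_eq : ∀ i, adm ℓ i → ∀ v ∈ D i, N.neg1 i v = v
  circ_eq_zero : ∀ i j, adm2 ℓ i j → ∀ v ∈ D i, ∀ u : N.o.Δ j, N.o.circ i j v u = 0
  dot_mem : ∀ i j, adm2 ℓ i j → ∀ v ∈ D i, ∀ a : N.o.R i j, N.o.dot i j v a ∈ D j

def algStr (D : ∀ i, AddSubgroup (N.o.Δ i)) (hD : N.IsAugmentation D) : PGOFAlgStr ℤ N.o where
  commR _ _ h a b := N.R_addCommute h a b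
  smulR _ _ k a := k • a
  smulR_add _ _ h k a b := (N.R_addCommute h a b).zsmul_add k
  add_smulR _ _ _ k k' a := add_zsmul a k k'
  mul_smulR _ _ _ k k' a := mul_zsmul a k k'
  one_smulR _ _ _ a := one_zsmul a
  actK i u n := quadAct (N.neg1 i) u n
  actK_add _ hi u v k := (N.isNegOneMap hi).quadAct_add u v k
  actK_one _ _ u := quadAct_one u
  actK_mul _ hi u k k' := (N.isNegOneMap hi).quadAct_quadAct u k k'
  D := D
  D_central := hD.central
  D_comm i hi u v := by
    rw [← addCommutatorElement_eq_sub]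
    exact hD.Dmin_le i hi (N.addCommutatorElement_mem_Dmin hi u v)
  smulD _ k v := k • v
  smulD_mem _ _ k _ hv := zsmul_mem hv k
  smulD_add i hi k v hv w _ := (show AddCommute v w from (hD.central i hi v hv w).symm).zsmul_add k
  add_smulD _ _ k k' v _ := add_zsmul v k k'
  mul_smulD _ _ k k' v _ := mul_zsmul v k k'
  one_smulD _ _ v _ := one_zsmul v
  actK_comm _ hi u v k k' := by
    rw [← addCommutatorElement_eq_sub, ← addCommutatorElement_eq_sub]
    exact (N.isNegOneMap hi).addCommutatorElement_quadAct u v k k'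
  τ i u := u + N.neg1 i u
  τ_mem i hi u := hD.Dmin_le i hi (N.add_neg1_mem_Dmin hi u)
  actK_add_scalar _ hi u k k' := (N.isNegOneMap hi).quadAct_add_int u k k'
  actK_D i hi v hv k := quadAct_of_map_eq (hD.neg1_eq i hi v hv) k
  r31 := hD.circ_eq_zero
  r32 i j h a b := hD.Dmin_le i h.1 (N.o.star_mem_Dmin h a b)
  r33 := hD.dot_mem
  r34 _ _ h k a := N.inv_zsmul h k a
  r35l _ _ _ h c a b := N.o.mul_zsmul_left h c a b
  r35r _ _ _ h c a b := N.o.mul_zsmul_right h c a b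
  r36l _ _ h c a b := N.o.star_zsmul_left h c a b
  r36r _ _ h c a b := N.o.star_zsmul_right h c a b
  r37l _ _ h c u v := N.circ_quadAct_left h c u v
  r37r _ _ h c u v := N.circ_quadAct_right h c u v
  r38l _ _ h c u a := N.tri_quadAct h c u a
  r38r _ _ h c u a := N.o.tri_zsmul_right h c u a
  r39 i j h c v hv a := N.tri_zsmul_left_of_circ_eq_zero h (hD.circ_eq_zero i j h v hv) c a
  r40l _ _ h c u a := N.dot_quadAct h u a c
  r40r _ _ h c u a := N.quadAct_dot h u a c
  r41 _ _ h c v _ a := N.o.dot_zsmul_left h c v a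

theorem Dmin_isAugmentation : N.IsAugmentation N.o.Dmin where
  Dmin_le _ _ := le_rfl
  central _ _ _ hv u := (N.o.addCommute_of_mem_Dmin hv u).eq.symm
  neg1_eq _ hi _ hv := N.neg1_eq_of_mem_Dmin hi hv
  circ_eq_zero _ _ h _ hv u := N.circ_eq_zero_of_mem_Dmin h hv u
  dot_mem _ _ h _ hv a := N.dot_mem_Dmin h hv a

/-- At an inadmissible index `i` every element lies in `Dmax i`. -/
def Dmax (i : ℤ) : AddSubgroup (N.o.Δ i) where
  carrier := {u | adm ℓ i →
    u = N.neg1 i u ∧ ∀ j, adm2 ℓ i j → ∀ v : N.o.Δ j, N.o.circ i j u v = 0}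
  zero_mem' hi := ⟨(N.neg1_zero hi).symm, fun _ h v => N.o.circ_zero_left h v⟩
  add_mem' {u v} hu hv hi := by
    refine ⟨by rw [N.neg1_add i hi, ← (hu hi).1, ← (hv hi).1], fun j h w => ?_⟩
    rw [N.o.r10 i j h, (hu hi).2 j h w, (hv hi).2 j h w, add_zero]
  neg_mem' {u} hu hi := by
    refine ⟨by rw [N.neg1_neg hi, ← (hu hi).1], fun j h w => ?_⟩
    rw [N.o.circ_neg_left h, (hu hi).2 j h w, neg_zero]

theorem coe_Dmax (hi : adm ℓ i) : (N.Dmax i : Set (N.o.Δ i)) =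
    {u | u = N.neg1 i u ∧ ∀ j, adm2 ℓ i j → ∀ v : N.o.Δ j, N.o.circ i j u v = 0} :=
  Set.ext fun _ => ⟨fun hu => hu hi, fun hu _ => hu⟩

theorem Dmax_central (hi : adm ℓ i) {v : N.o.Δ i} (hv : v ∈ N.Dmax i) (u : N.o.Δ i) :
    u + v = v + u := by
  induction u using N.Δ_induction_of_abs_ne hi 0 with
  | zero => rw [zero_add, add_zero]
  | add x y hx hy => exact (AddCommute.add_left hx hy : AddCommute (x + y) v)
  | neg x hx => exact (AddCommute.neg_left hx : AddCommute (-x) v)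
  | dot j hij _ w b =>
    have hwv : N.o.circ j i w v = 0 :=
      N.o.circ_eq_zero_of_circ_swap_eq_zero hij.symm ((hv hi).2 j hij w)
    rw [← addCommutatorElement_eq_zero_iff_add_comm, N.o.addCommutatorElement_dot hij.symm, hwv,
      N.o.star_zero_right hij.neg_right, neg_zero]
  | star j hij _ a b => exact N.o.star_addCommute hij a b v

theorem circ_dot_eq_zero_of_mem_Dmax (h : adm2 ℓ i j) {v : N.o.Δ i} (hv : v ∈ N.Dmax i)
    (a : N.o.R i j) (hjk : adm2 ℓ j k) (hki : |k| ≠ |i|) (w : N.o.Δ k) :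
    N.o.circ j k (N.o.dot i j v a) w = 0 := by
  have hkij : adm3 ℓ k i j := ⟨hjk.2.1, h.1, h.2.1, hki, hjk.2.2.symm, h.2.2⟩
  have hwv : N.o.circ k i w v = 0 :=
    N.o.circ_eq_zero_of_circ_swap_eq_zero ⟨hjk.2.1, h.1, hki⟩
      ((hv h.1).2 k ⟨h.1, hjk.2.1, hki.symm⟩ w)
  refine N.o.circ_eq_zero_of_circ_swap_eq_zero hjk ?_
  rw [N.o.r22 k i j hkij, hwv, N.o.mul_zero_left hkij.neg1]

theorem dot_mem_Dmax (h : adm2 ℓ i j) {v : N.o.Δ i} (hv : v ∈ N.Dmax i) (a : N.o.R i j) :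
    N.o.dot i j v a ∈ N.Dmax j := by
  refine fun _ => ⟨?_, fun k hjk w => ?_⟩
  · rw [N.neg1_dot j i h.symm, ← N.dot_neg1 h, ← (hv h.1).1]
  by_cases hki : |k| = |i|
  · induction w using N.Δ_induction_of_abs_ne hjk.2.1 |j| with
    | zero => exact N.o.circ_zero_right hjk _
    | add x y hx hy => rw [N.o.r11 j k hjk, hx, hy, add_zero]
    | neg x hx => rw [N.o.circ_neg_right hjk, hx, neg_zero]
    | dot m hkm hmj w' b' =>
      have hjmk : adm3 ℓ j m k := ⟨h.2.1, hkm.2.1, hjk.2.1, hmj.symm, hjk.2.2, hkm.2.2.symm⟩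
      rw [N.o.r22 j m k hjmk, N.circ_dot_eq_zero_of_mem_Dmax h hv a ⟨h.2.1, hkm.2.1, hmj.symm⟩
        (hki ▸ hkm.2.2.symm),
        N.o.mul_zero_left hjmk.neg1]
    | star m hkm hmj a' b' =>
      exact N.o.r21 j k m ⟨h.2.1, hjk.2.1, hkm.2.1, hjk.2.2, hmj.symm, hkm.2.2⟩ _ a' b'
  · exact N.circ_dot_eq_zero_of_mem_Dmax h hv a hjk hki w

theorem Dmax_isAugmentation : N.IsAugmentation N.Dmax where
  Dmin_le _ hi _ hv _ :=
    ⟨(N.neg1_eq_of_mem_Dmin hi hv).symm, fun _ h w => N.circ_eq_zero_of_mem_Dmin h hv w⟩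
  central _ hi _ hv u := N.Dmax_central hi hv u
  neg1_eq _ hi _ hv := ((hv hi).1).symm
  circ_eq_zero _ j h _ hv u := (hv h.1).2 j h u
  dot_mem _ _ h _ hv a := N.dot_mem_Dmax h hv a

theorem circ_eq_zero_of_circ_pm_eq_zero (h : adm2 ℓ i j) {u : N.o.Δ i}
    (hu : ∀ v : N.o.Δ j, N.o.circ i j u v = 0)
    (hu' : ∀ v : N.o.Δ (-j), N.o.circ i (-j) u v = 0)
    {k : ℤ} (hik : adm2 ℓ i k) (w : N.o.Δ k) : N.o.circ i k u w = 0 := by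
  by_cases hkj : |k| = |j|
  · rcases abs_eq_abs.mp hkj with rfl | rfl
    exacts [hu w, hu' w]
  have hikj : adm3 ℓ i k j := ⟨h.1, hik.2.1, h.2.1, hik.2.2, h.2.2, hkj⟩
  induction w using N.Δ_induction ⟨hik.2.1, h.2.1, hkj⟩ with
  | zero => exact N.o.circ_zero_right hik u
  | add x y hx hy => rw [N.o.r11 i k hik, hx, hy, add_zero]
  | neg x hx => rw [N.o.circ_neg_right hik, hx, neg_zero]
  | dot w b =>
    rw [N.o.r22 i j k hikj.swap23, hu, N.o.mul_zero_left hikj.swap23.neg1]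
  | dot' w b =>
    rw [N.o.r22 i (-j) k hikj.swap23.neg2, hu', N.o.mul_zero_left hikj.swap23.neg2.neg1]
  | star a b => exact N.o.r21 i k j hikj u a b

section Uniqueness

variable (s : PGOFAlgStr ℤ N.o)

theorem smulR_eq (h : adm2 ℓ i j) (c : ℤ) (a : N.o.R i j) : s.smulR i j c a = c • a := by
  rw [eq_zsmul_of_map_add (f := (s.smulR i j · a)) (fun m n => s.add_smulR i j h m n a) c,
    s.one_smulR i j h a]

theorem smulD_eq (hi : adm ℓ i) (c : ℤ) {v : N.o.Δ i} (hv : v ∈ s.D i) :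
    s.smulD i c v = c • v := by
  rw [eq_zsmul_of_map_add (f := (s.smulD i · v)) (fun m n => s.add_smulD i hi m n v hv) c,
    s.one_smulD i hi v hv]

theorem actK_neg_one (hi : adm ℓ i) (u : N.o.Δ i) : s.actK i u (-1) = N.neg1 i u := by
  have hadd := s.actK_add i hi
  have hzero : s.actK i 0 (-1) = 0 :=
    (AddMonoidHom.mk' (s.actK i · (-1)) (hadd · · (-1))).map_zero
  have hneg (x : N.o.Δ i) : s.actK i (-x) (-1) = -s.actK i x (-1) :=
    (AddMonoidHom.mk' (s.actK i · (-1)) (hadd · · (-1))).map_neg x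
  induction u using N.Δ_induction_of_abs_ne hi 0 with
  | zero => rw [hzero, N.neg1_zero hi]
  | add x y hx hy => rw [hadd, hx, hy, N.neg1_add i hi]
  | neg x hx => rw [hneg x, hx, N.neg1_neg hi]
  | dot j hij _ w b =>
    rw [s.r40r j i hij.symm, N.smulR_eq s hij.symm, neg_one_zsmul, N.neg1_dot i j hij]
  | star j hij _ a b =>
    rw [s.actK_D i hi _ (s.r32 i j hij a b), neg_mul_neg, one_mul,
      s.one_smulD i hi _ (s.r32 i j hij a b), N.neg1_star i j hij]

theorem τ_eq (hi : adm ℓ i) (u : N.o.Δ i) : s.τ i u = u + N.neg1 i u := by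
  have hτ := s.τ_mem i hi u
  have h0 : s.actK i u 0 = 0 := by
    have h := s.actK_add_scalar i hi u 0 0
    rw [add_zero, mul_zero, N.smulD_eq s hi 0 hτ, zero_zsmul, add_zero] at h
    exact add_eq_left.mp h.symm
  have h := s.actK_add_scalar i hi u 1 (-1)
  rw [add_neg_cancel, h0, s.actK_one i hi u, N.actK_neg_one s hi, one_mul, N.smulD_eq s hi _ hτ,
    neg_one_zsmul, ((show AddCommute (N.neg1 i u) (s.τ i u) from
      s.D_central i hi _ hτ _).symm.neg_left).right_comm] at h
  exact (add_neg_eq_zero.mp h.symm).symm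

theorem actK_eq_quadAct (hi : adm ℓ i) (u : N.o.Δ i) (n : ℤ) :
    s.actK i u n = quadAct (N.neg1 i) u n :=
  (N.isNegOneMap hi).eq_quadAct (s.actK_one i hi u) (N.actK_neg_one s hi u)
    (fun k k' => by
      rw [s.actK_add_scalar i hi, N.smulD_eq s hi _ (s.τ_mem i hi u), N.τ_eq s hi]) n

end Uniqueness

end NegOneData

/-- Lemma `idem-cond`. -/
theorem statement16 {ℓ : ℕ} (hl : 3 ≤ ℓ) (o : PGOFR ℓ)
    (h29 : o.cond29) (h30 : o.cond30)
    -- the homomorphisms `u ↦ u·(-1)`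
    (neg1 : ∀ i, o.Δ i → o.Δ i)
    (hneg1_add : ∀ i, adm ℓ i → ∀ u v : o.Δ i,
      neg1 i (u + v) = neg1 i u + neg1 i v)
    (hneg1_star : ∀ i j, adm2 ℓ i j → ∀ (a : o.R (-i) j) (b : o.R j i),
      neg1 i (o.star i j a b) = o.star i j a b)
    (hneg1_dot : ∀ i j, adm2 ℓ i j → ∀ (u : o.Δ j) (b : o.R j i),
      neg1 i (o.dot j i u b) = o.dot j i u (-b)) :
    -- a partial graded odd form ℤ-algebra structure with the smallest augmentation
    (∃ s : PGOFAlgStr ℤ o, ∀ i, adm ℓ i → s.D i = o.Dmin i) ∧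
    -- and one with the largest augmentation
    (∃ s : PGOFAlgStr ℤ o, ∀ i, adm ℓ i → (s.D i : Set (o.Δ i)) =
      {u | u = neg1 i u ∧ ∀ j, adm2 ℓ i j → ∀ v : o.Δ j, o.circ i j u v = 0}) ∧
    -- the largest augmentation can be computed using a single fixed j⋆
    (∀ i j, adm2 ℓ i j →
      ({u | u = neg1 i u ∧ ∀ j', adm2 ℓ i j' → ∀ v : o.Δ j', o.circ i j' u v = 0}
        : Set (o.Δ i)) =
      {u | u = neg1 i u ∧ (∀ v : o.Δ j, o.circ i j u v = 0) ∧
        (∀ v : o.Δ (-j), o.circ i (-j) u v = 0)}) ∧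
    -- the right action of the multiplicative monoid ℤ is uniquely determined
    (∀ s s' : PGOFAlgStr ℤ o, ∀ i, adm ℓ i → ∀ (u : o.Δ i) (n : ℤ),
      s.actK i u n = s'.actK i u n) ∧
    -- and it is given by the explicit binomial formula
    (∀ s : PGOFAlgStr ℤ o, ∀ i, adm ℓ i → ∀ (u : o.Δ i) (n : ℤ),
      s.actK i u n = ((n * (n + 1)) / 2) • u + ((n * (n - 1)) / 2) • neg1 i u) := by
  let N : NegOneData ℓ := ⟨o, hl, h29, h30, neg1, hneg1_add, hneg1_star, hneg1_dot⟩
  have hact (s : PGOFAlgStr ℤ o) (i : ℤ) (hi : adm ℓ i) (u : o.Δ i) (n : ℤ) :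
      s.actK i u n = quadAct (neg1 i) u n :=
    N.actK_eq_quadAct s hi u n
  refine ⟨⟨N.algStr _ N.Dmin_isAugmentation, fun _ _ => rfl⟩,
    ⟨N.algStr _ N.Dmax_isAugmentation, fun _ hi => N.coe_Dmax hi⟩, fun i j hij => ?_,
    fun s s' i hi u n => (hact s i hi u n).trans (hact s' i hi u n).symm, hact⟩
  ext u
  exact ⟨fun ⟨hu, hcirc⟩ => ⟨hu, hcirc j hij, hcirc (-j) hij.neg_right⟩,
    fun ⟨hu, hcirc, hcirc'⟩ =>
      ⟨hu, fun _ => N.circ_eq_zero_of_circ_pm_eq_zero hij hcirc hcirc'⟩⟩
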